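/- arXiv:2001.08932 — 6 statements merged into one kernel-verified Lean document; each statement's English description precedes it below -/
import Mathlib

section
/- Let G be a finite group and let m be the minimum of the orders of the maximal cyclic subgroups of G. Then the minimum degree of the enhanced power graph of G equals m - 1. -/
/-- The enhanced power graph of a group `G`: distinct `x, y` are adjacent iff they lie in a
common cyclic subgroup of `G`. -/
def enhancedPowerGraph (G : Type*) [Group G] : SimpleGraph G where
  Adj x y := x ≠ y ∧ ∃ z : G, x ∈ Subgroup.zpowers z ∧ y ∈ Subgroup.zpowers z
  symm := by
    constructor
    rintro x y ⟨hxy, z, hx, hy⟩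
    exact ⟨hxy.symm, z, hy, hx⟩
  loopless := by
    constructor
    rintro x ⟨hx, -⟩
    exact hx rfl

/-- The minimum degree of a finite graph. -/
noncomputable def minDeg {V : Type*} [Fintype V] (g : SimpleGraph V) : ℕ :=
  sInf {k | ∃ v : V, (g.neighborSet v).ncard = k}

/-- A set of vertices is independent if no two of its members are adjacent. -/
def IsIndepSet' {V : Type*} (g : SimpleGraph V) (s : Set V) : Prop :=
  s.Pairwise fun x y => ¬ g.Adj x y

/-- The independence number. -/
noncomputable def indepNum {V : Type*} (g : SimpleGraph V) : ℕ :=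
  sSup {k | ∃ s : Set V, IsIndepSet' g s ∧ s.ncard = k}

/-- A matching: a set of edges of `g`, no two of which share a vertex. -/
def IsMatching' {V : Type*} (g : SimpleGraph V) (M : Set (Sym2 V)) : Prop :=
  M ⊆ g.edgeSet ∧ M.Pairwise fun e f => ∀ v : V, v ∈ e → v ∉ f

/-- The matching number. -/
noncomputable def matchingNum {V : Type*} (g : SimpleGraph V) : ℕ :=
  sSup {k | ∃ M : Set (Sym2 V), IsMatching' g M ∧ M.ncard = k}

/-- An edge cover: a set of edges such that every vertex is incident to some edge of it. -/
def IsEdgeCover {V : Type*} (g : SimpleGraph V) (E : Set (Sym2 V)) : Prop :=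
  E ⊆ g.edgeSet ∧ ∀ v : V, ∃ e ∈ E, v ∈ e

/-- The edge covering number. -/
noncomputable def edgeCoverNum {V : Type*} (g : SimpleGraph V) : ℕ :=
  sInf {k | ∃ E : Set (Sym2 V), IsEdgeCover g E ∧ E.ncard = k}

/-- A vertex cover: a set of vertices containing an endpoint of every edge. -/
def IsVertexCover {V : Type*} (g : SimpleGraph V) (s : Set V) : Prop :=
  ∀ ⦃x y : V⦄, g.Adj x y → x ∈ s ∨ y ∈ s

/-- The vertex covering number. -/
noncomputable def vertexCoverNum {V : Type*} (g : SimpleGraph V) : ℕ :=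
  sInf {k | ∃ s : Set V, IsVertexCover g s ∧ s.ncard = k}

/-- The edge connectivity: the least size of a set of edges whose deletion disconnects. -/
noncomputable def edgeConnectivity {V : Type*} (g : SimpleGraph V) : ℕ :=
  sInf {k | ∃ S : Set (Sym2 V), S ⊆ g.edgeSet ∧ ¬ (g.deleteEdges S).Connected ∧ S.ncard = k}

/-- The strong metric dimension. -/
noncomputable def sdim {V : Type*} (g : SimpleGraph V) : ℕ :=
  sInf {k | ∃ U : Set V,
    (∀ u v : V, u ≠ v → ∃ z ∈ U,
      g.dist z u = g.dist z v + g.dist v u ∨ g.dist z v = g.dist z u + g.dist u v) ∧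
    U.ncard = k}

/-- The clique number. -/
noncomputable def cliqueNum' {V : Type*} (g : SimpleGraph V) : ℕ :=
  sSup {k | ∃ s : Finset V, g.IsNClique k s}

/-- A graph is perfect if every induced subgraph has chromatic number equal to clique number. -/
def IsPerfect {V : Type*} (g : SimpleGraph V) : Prop :=
  ∀ s : Set V, (g.induce s).chromaticNumber = (cliqueNum' (g.induce s) : ℕ∞)

/-- `H` is a maximal cyclic subgroup of `G`. -/
def IsMaximalCyclic {G : Type*} [Group G] (H : Subgroup G) : Prop :=
  (∃ g : G, H = Subgroup.zpowers g) ∧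
    ∀ K : Subgroup G, (∃ g : G, K = Subgroup.zpowers g) → H ≤ K → H = K

/-
A vertex `v` is adjacent to every other element of a cyclic subgroup containing it, and every
element of a finite group lies in a maximal cyclic subgroup, so every degree is at least `m - 1`.
Conversely, if `g` generates a maximal cyclic subgroup `H` of order `m`, any cyclic subgroup
containing `g` contains `H` and hence equals it, so the neighbours of `g` are exactly `H \ {g}`.
-/

section

open Subgroup

variable {G : Type*} [Group G]

theorem isMaximalCyclic_iff_maximal {H : Subgroup G} :
    IsMaximalCyclic H ↔ Maximal (fun K : Subgroup G ↦ ∃ g : G, K = zpowers g) H :=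
  and_congr_right fun _ ↦
    ⟨fun h K hK hle ↦ (h K hK hle).ge, fun h _ hK hle ↦ hle.antisymm (h hK hle)⟩

theorem exists_isMaximalCyclic_mem [Finite G] (v : G) :
    ∃ K : Subgroup G, IsMaximalCyclic K ∧ v ∈ K := by
  obtain ⟨K, hle, hK⟩ :=
    Finite.exists_le_maximal (p := fun K : Subgroup G ↦ ∃ g : G, K = zpowers g) ⟨v, rfl⟩
  exact ⟨K, isMaximalCyclic_iff_maximal.2 hK, hle (mem_zpowers v)⟩

theorem ncard_coe_diff_singleton {K : Subgroup G} {v : G} (hv : v ∈ K) :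
    ((K : Set G) \ {v}).ncard = Nat.card K - 1 := by
  rw [Set.ncard_sdiff_singleton_of_mem hv, ← Nat.card_coe_set_eq, SetLike.coe_sort_coe]

theorem diff_singleton_subset_neighborSet_enhancedPowerGraph {z v : G} (hv : v ∈ zpowers z) :
    (zpowers z : Set G) \ {v} ⊆ (enhancedPowerGraph G).neighborSet v :=
  fun _ ⟨hy, hyv⟩ ↦ ⟨Ne.symm hyv, z, hv, hy⟩

theorem neighborSet_enhancedPowerGraph_of_isMaximalCyclic {g : G}
    (hg : IsMaximalCyclic (zpowers g)) :
    (enhancedPowerGraph G).neighborSet g = (zpowers g : Set G) \ {g} := by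
  refine subset_antisymm ?_ (diff_singleton_subset_neighborSet_enhancedPowerGraph (mem_zpowers g))
  rintro y ⟨hne, z, hgz, hyz⟩
  have hgz : zpowers g = zpowers z := hg.2 _ ⟨z, rfl⟩ (zpowers_le.2 hgz)
  exact ⟨hgz ▸ hyz, Ne.symm hne⟩

theorem card_zpowers_sub_one_le_ncard_neighborSet_enhancedPowerGraph [Finite G] {z v : G}
    (hv : v ∈ zpowers z) :
    Nat.card (zpowers z) - 1 ≤ ((enhancedPowerGraph G).neighborSet v).ncard := by
  rw [← ncard_coe_diff_singleton hv]
  exact Set.ncard_le_ncard (diff_singleton_subset_neighborSet_enhancedPowerGraph hv)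

end

/-- For a finite group `G`, if `m` is the minimum of the orders of the
maximal cyclic subgroups of `G`, then the minimum degree of the enhanced power graph of `G`
is `m - 1`. -/
theorem stmt_0 {G : Type*} [Group G] [Fintype G] (m : ℕ)
    (hm : IsLeast {k | ∃ H : Subgroup G, IsMaximalCyclic H ∧ Nat.card H = k} m) :
    minDeg (enhancedPowerGraph G) = m - 1 := by
  obtain ⟨⟨H, hH, rfl⟩, hleast⟩ := hm
  obtain ⟨g, rfl⟩ := hH.1
  refine IsLeast.csInf_eq ⟨⟨g, ?_⟩, ?_⟩
  · rw [neighborSet_enhancedPowerGraph_of_isMaximalCyclic hH,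
      ncard_coe_diff_singleton (Subgroup.mem_zpowers g)]
  · rintro _ ⟨v, rfl⟩
    obtain ⟨K, hK, hvK⟩ := exists_isMaximalCyclic_mem v
    obtain ⟨z, rfl⟩ := hK.1
    exact (Nat.sub_le_sub_right (hleast ⟨_, hK, rfl⟩) 1).trans
      (card_zpowers_sub_one_le_ncard_neighborSet_enhancedPowerGraph hvK)
end

section
/- For any finite group G, the edge connectivity of the enhanced power graph of G equals its minimum degree; that is, the minimum cardinality of a set of edges whose deletion disconnects P_e(G) coincides with δ(P_e(G)). -/
section EdgeConnectivity

variable {V : Type*} (g : SimpleGraph V)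

lemma not_connected_deleteEdges_incidenceSet [Nontrivial V] (v : V) :
    ¬ (g.deleteEdges (g.incidenceSet v)).Connected := by
  obtain ⟨w, hw⟩ := exists_ne v
  intro hconn
  obtain ⟨p⟩ := hconn.preconnected v w
  cases p with
  | nil => exact hw rfl
  | cons hadj _ =>
    rw [SimpleGraph.deleteEdges_adj] at hadj
    exact hadj.2 ⟨hadj.1, Sym2.mem_mk_left _ _⟩

lemma edgeConnectivity_le_ncard_neighborSet [Nontrivial V] (v : V) :
    edgeConnectivity g ≤ (g.neighborSet v).ncard := by
  classical
  exact Nat.sInf_le ⟨g.incidenceSet v, g.incidenceSet_subset v,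
    not_connected_deleteEdges_incidenceSet g v,
    Set.ncard_congr' (g.incidenceSetEquivNeighborSet v)⟩

lemma minDeg_le_ncard_neighborSet [Fintype V] (v : V) : minDeg g ≤ (g.neighborSet v).ncard :=
  Nat.sInf_le ⟨v, rfl⟩

lemma edgeConnectivity_le_minDeg [Fintype V] [Nontrivial V] : edgeConnectivity g ≤ minDeg g := by
  obtain ⟨v, hv⟩ := Nat.sInf_mem
    (⟨_, Classical.arbitrary V, rfl⟩ : {k | ∃ v : V, (g.neighborSet v).ncard = k}.Nonempty)
  rw [minDeg, ← hv]
  exact edgeConnectivity_le_ncard_neighborSet g v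

lemma ncard_neighborSet_le_of_not_reachable [Finite V] {u b : V} (hu : ∀ x ≠ u, g.Adj u x)
    {S : Set (Sym2 V)} (hb : ¬ (g.deleteEdges S).Reachable u b) :
    (g.neighborSet b).ncard ≤ S.ncard := by
  classical
  set B := {x | ¬ (g.deleteEdges S).Reachable u x}
  refine Set.ncard_le_ncard_of_injOn (fun x => if x ∈ B then s(u, x) else s(b, x)) ?_ ?_
  · intro x hx
    by_cases hxB : x ∈ B
    · have hxu : x ≠ u := by rintro rfl; exact hxB .rfl
      simp only [hxB, if_true]
      by_contra hS
      exact hxB (SimpleGraph.deleteEdges_adj.2 ⟨hu x hxu, hS⟩).reachable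
    · simp only [hxB, if_false]
      by_contra hS
      have hbx : (g.deleteEdges S).Adj b x := SimpleGraph.deleteEdges_adj.2 ⟨hx, hS⟩
      exact hb ((not_not.1 hxB).trans hbx.symm.reachable)
  · intro x hx y hy hxy
    by_cases hxB : x ∈ B <;> by_cases hyB : y ∈ B <;>
      simp only [hxB, hyB, if_true, if_false, Sym2.eq_iff] at hxy <;>
      grind [SimpleGraph.mem_neighborSet, SimpleGraph.irrefl]

lemma minDeg_le_edgeConnectivity_of_forall_adj [Fintype V] [Nontrivial V] {u : V}
    (hu : ∀ x ≠ u, g.Adj u x) : minDeg g ≤ edgeConnectivity g := by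
  refine le_csInf
    ⟨_, _, g.incidenceSet_subset u, not_connected_deleteEdges_incidenceSet g u, rfl⟩ ?_
  rintro k ⟨S, -, hS, rfl⟩
  obtain ⟨b, hb⟩ : ∃ b, ¬ (g.deleteEdges S).Reachable u b := by
    by_contra! h
    exact hS ((SimpleGraph.connected_iff_exists_forall_reachable (g.deleteEdges S)).2 ⟨u, h⟩)
  exact (minDeg_le_ncard_neighborSet g b).trans (ncard_neighborSet_le_of_not_reachable g hu hb)

lemma edgeConnectivity_eq_zero_of_subsingleton [Subsingleton V] [Nonempty V] :
    edgeConnectivity g = 0 := by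
  refine Nat.sInf_eq_zero.2 (Or.inr (Set.eq_empty_of_forall_notMem ?_))
  rintro k ⟨S, -, hS, -⟩
  exact hS ⟨SimpleGraph.Preconnected.of_subsingleton⟩

lemma minDeg_eq_zero_of_subsingleton [Fintype V] [Subsingleton V] [Nonempty V] : minDeg g = 0 :=
  Nat.sInf_eq_zero.2 <| Or.inl ⟨Classical.arbitrary V, by
    simp [SimpleGraph.neighborSet, Subsingleton.elim _ (Classical.arbitrary V)]⟩

theorem edgeConnectivity_eq_minDeg_of_forall_adj [Fintype V] {u : V} (hu : ∀ x ≠ u, g.Adj u x) :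
    edgeConnectivity g = minDeg g := by
  rcases subsingleton_or_nontrivial V with _ | _
  · have : Nonempty V := ⟨u⟩
    rw [edgeConnectivity_eq_zero_of_subsingleton, minDeg_eq_zero_of_subsingleton]
  · exact le_antisymm (edgeConnectivity_le_minDeg g)
      (minDeg_le_edgeConnectivity_of_forall_adj g hu)

end EdgeConnectivity

lemma enhancedPowerGraph_one_adj {G : Type*} [Group G] {x : G} (hx : x ≠ 1) :
    (enhancedPowerGraph G).Adj 1 x :=
  ⟨hx.symm, x, one_mem _, Subgroup.mem_zpowers x⟩

/-- For any finite group `G`, the edge connectivity of the enhanced power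
graph of `G` equals its minimum degree. -/
theorem stmt_1 {G : Type*} [Group G] [Fintype G] :
    edgeConnectivity (enhancedPowerGraph G) = minDeg (enhancedPowerGraph G) :=
  edgeConnectivity_eq_minDeg_of_forall_adj _ fun _ => enhancedPowerGraph_one_adj
end

section
/- Let G be a finite nilpotent group whose order has distinct prime factors p_1, p_2, …, p_r, and for each i let m_i be the number of maximal cyclic subgroups of a Sylow p_i-subgroup of G. Then the independence number of the enhanced power graph of G equals the product m_1 · m_2 · … · m_r. -/
/-!
Two distinct maximal cyclic subgroups never lie in a common cyclic subgroup, and every element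
lies in some maximal cyclic subgroup (the group is finite). Hence one generator from each maximal
cyclic subgroup is a largest independent set of the enhanced power graph, and its independence
number is the number of maximal cyclic subgroups.

A finite nilpotent group is the direct product of its Sylow subgroups, whose orders are
pairwise coprime. By the Chinese remainder theorem the cyclic subgroup generated by `(zᵢ)` in such
a product is `∏ ⟨zᵢ⟩`, so `(Nᵢ) ↦ ∏ Nᵢ` is an order embedding mapping the tuples of cyclic
subgroups onto the cyclic subgroups of the product; maximal elements correspond, and their number
is the product of the numbers of maximal cyclic subgroups of the Sylow subgroups.
-/

lemma isMaximalCyclic_iff_maximal_s3 {G : Type*} [Group G] {H : Subgroup G} :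
    IsMaximalCyclic H ↔ Maximal (· ∈ Set.range Subgroup.zpowers) H := by
  constructor
  · rintro ⟨⟨g, rfl⟩, hmax⟩
    exact ⟨⟨g, rfl⟩, fun K ⟨k, hk⟩ hle => (hmax K ⟨k, hk.symm⟩ hle).ge⟩
  · rintro ⟨⟨g, rfl⟩, hmax⟩
    exact ⟨⟨g, rfl⟩, fun K ⟨k, hk⟩ hle => le_antisymm hle (hmax ⟨k, hk.symm⟩ hle)⟩

lemma ncard_setOf_maximal_mem_image {α β : Type*} [PartialOrder α] [Preorder β] (f : α ↪o β)
    (s : Set α) : {x | Maximal (· ∈ f '' s) x}.ncard = {x | Maximal (· ∈ s) x}.ncard := by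
  rw [← image_monotone_setOfPred_maximal_mem fun _ _ _ _ => f.le_iff_le,
    Set.ncard_image_of_injective _ f.injective]

lemma maximal_mem_univ_pi_iff {ι : Type*} [DecidableEq ι] {α : ι → Type*}
    [∀ i, Preorder (α i)] {S : ∀ i, Set (α i)} {x : ∀ i, α i} :
    Maximal (· ∈ Set.univ.pi S) x ↔ ∀ i, Maximal (· ∈ S i) (x i) := by
  refine ⟨fun h i => ⟨h.prop i (Set.mem_univ i), fun y hy hxy => ?_⟩,
    fun h => ⟨fun i _ => (h i).prop, fun y hy hxy i => (h i).2 (hy i trivial) (hxy i)⟩⟩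
  have hmem : Function.update x i y ∈ Set.univ.pi S :=
    (Set.update_mem_pi_iff_of_mem h.prop).mpr fun _ => hy
  have hle : x ≤ Function.update x i y := le_update_iff.mpr ⟨hxy, fun _ _ => le_rfl⟩
  simpa using h.2 hmem hle i

section EnhancedPowerGraph

variable {G : Type*} [Group G]

lemma exists_isIndepSet'_ncard_eq :
    ∃ s : Set G, IsIndepSet' (enhancedPowerGraph G) s ∧
      s.ncard = {H : Subgroup G | IsMaximalCyclic H}.ncard := by
  choose! g hg using fun (H : Subgroup G) (hH : IsMaximalCyclic H) => hH.1
  refine ⟨g '' {H | IsMaximalCyclic H}, ?_, Set.InjOn.ncard_image fun H hH K hK hgHK => ?_⟩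
  · rintro _ ⟨H, hH, rfl⟩ _ ⟨K, hK, rfl⟩ hne ⟨-, z, hHz, hKz⟩
    have hH' := hH.2 _ ⟨z, rfl⟩ (by rwa [hg H hH, Subgroup.zpowers_le])
    have hK' := hK.2 _ ⟨z, rfl⟩ (by rwa [hg K hK, Subgroup.zpowers_le])
    exact hne (by rw [hH'.trans hK'.symm])
  · rw [hg H hH, hg K hK, hgHK]

variable [Finite G]

lemma ncard_le_of_isIndepSet' {s : Set G} (hs : IsIndepSet' (enhancedPowerGraph G) s) :
    s.ncard ≤ {H : Subgroup G | IsMaximalCyclic H}.ncard := by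
  have hcover : ∀ x : G, ∃ H : Subgroup G, IsMaximalCyclic H ∧ x ∈ H := fun x => by
    obtain ⟨H, hxH, hH⟩ :=
      Finite.exists_le_maximal (Set.mem_range_self (f := Subgroup.zpowers) x)
    exact ⟨H, isMaximalCyclic_iff_maximal_s3.mpr hH, hxH (Subgroup.mem_zpowers x)⟩
  choose M hM hxM using hcover
  have hinj : Set.InjOn M s := fun x hx y hy hxy => by
    by_contra hne
    obtain ⟨z, hz⟩ := (hM x).1
    exact hs hx hy hne ⟨hne, z, hz ▸ hxM x, hz ▸ hxy ▸ hxM y⟩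
  rw [← hinj.ncard_image]
  exact Set.ncard_le_ncard (Set.image_subset_iff.mpr fun x _ => hM x) (Set.toFinite _)

lemma indepNum_enhancedPowerGraph :
    indepNum (enhancedPowerGraph G) = {H : Subgroup G | IsMaximalCyclic H}.ncard :=
  IsGreatest.csSup_eq ⟨exists_isIndepSet'_ncard_eq, fun _ ⟨_, hs, hcard⟩ =>
    hcard ▸ ncard_le_of_isIndepSet' hs⟩

end EnhancedPowerGraph

lemma Set.ncard_univ_pi {ι : Type*} [Fintype ι] {α : ι → Type*} (t : ∀ i, Set (α i)) :
    (Set.univ.pi t).ncard = ∏ i, (t i).ncard := by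
  simp only [← Nat.card_coe_set_eq, Nat.card_congr (Equiv.Set.univPi t), Nat.card_pi]

lemma MulEquiv.ncard_setOf_isMaximalCyclic {G H : Type*} [Group G] [Group H] (e : G ≃* H) :
    {M : Subgroup G | IsMaximalCyclic M}.ncard = {M : Subgroup H | IsMaximalCyclic M}.ncard := by
  have hrange : e.mapSubgroup '' Set.range Subgroup.zpowers = Set.range Subgroup.zpowers := by
    rw [← Set.range_comp, ← e.surjective.range_comp]
    exact congrArg Set.range (funext fun g => MonoidHom.map_zpowers e.toMonoidHom g)
  simp_rw [isMaximalCyclic_iff_maximal_s3, ← hrange]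
  exact (ncard_setOf_maximal_mem_image e.mapSubgroup.toOrderEmbedding _).symm

section Pi

variable {ι : Type*} {f : ι → Type*} [∀ i, Group (f i)]

lemma Subgroup.pi_univ_le_pi_univ_iff [DecidableEq ι] {H K : ∀ i, Subgroup (f i)} :
    Subgroup.pi Set.univ H ≤ Subgroup.pi Set.univ K ↔ H ≤ K := by
  refine ⟨fun h i x hx => ?_, fun h x hx i _ => h i (hx i trivial)⟩
  exact (Subgroup.mulSingle_mem_pi i x).mp (h ((Subgroup.mulSingle_mem_pi i x).mpr fun _ => hx))
    trivial

variable [Fintype ι] [∀ i, Finite (f i)]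

lemma zpowers_eq_pi_of_coprime
    (hco : Pairwise fun i j => Nat.Coprime (Nat.card (f i)) (Nat.card (f j))) (z : ∀ i, f i) :
    Subgroup.zpowers z = Subgroup.pi Set.univ fun i => Subgroup.zpowers (z i) := by
  refine le_antisymm (Subgroup.zpowers_le.mpr fun i _ => Subgroup.mem_zpowers (z i))
    fun x hx => ?_
  have hpow : ∀ i, ∃ k : ℕ, z i ^ k = x i := fun i =>
    (Submonoid.mem_powers_iff _ _).mp (mem_powers_iff_mem_zpowers.mpr (hx i trivial))
  choose k hk using hpow
  obtain ⟨n, hn⟩ := Nat.chineseRemainderOfFinset k (fun i => orderOf (z i)) Finset.univ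
    (fun i _ => (orderOf_pos (z i)).ne')
    fun _ _ _ _ hij => (hco hij).of_dvd (orderOf_dvd_natCard _) (orderOf_dvd_natCard _)
  refine ⟨n, funext fun i => ?_⟩
  simpa [← hk i] using pow_eq_pow_iff_modEq.mpr (hn i (Finset.mem_univ i))

lemma range_zpowers_pi_of_coprime
    (hco : Pairwise fun i j => Nat.Coprime (Nat.card (f i)) (Nat.card (f j))) :
    Set.range (Subgroup.zpowers : (∀ i, f i) → _) =
      Subgroup.pi Set.univ '' Set.univ.pi fun _ => Set.range Subgroup.zpowers := by
  ext K
  constructor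
  · rintro ⟨z, rfl⟩
    exact ⟨_, fun i _ => ⟨z i, rfl⟩, (zpowers_eq_pi_of_coprime hco z).symm⟩
  · rintro ⟨N, hN, rfl⟩
    choose g hg using fun i => hN i trivial
    exact ⟨g, by simp_rw [zpowers_eq_pi_of_coprime hco, hg]⟩

lemma ncard_setOf_isMaximalCyclic_pi_of_coprime [DecidableEq ι]
    (hco : Pairwise fun i j => Nat.Coprime (Nat.card (f i)) (Nat.card (f j))) :
    {M : Subgroup (∀ i, f i) | IsMaximalCyclic M}.ncard =
      ∏ i, {N : Subgroup (f i) | IsMaximalCyclic N}.ncard := by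
  let Φ : (∀ i, Subgroup (f i)) ↪o Subgroup (∀ i, f i) :=
    OrderEmbedding.ofMapLEIff _ fun _ _ => Subgroup.pi_univ_le_pi_univ_iff
  simp_rw [isMaximalCyclic_iff_maximal_s3, range_zpowers_pi_of_coprime hco]
  refine (ncard_setOf_maximal_mem_image Φ _).trans ?_
  rw [← Set.ncard_univ_pi]
  congr 1
  ext N
  rw [Set.mem_univ_pi]
  exact maximal_mem_univ_pi_iff

end Pi

section Sylow

variable {G : Type*} [Group G] [Finite G] (P : ∀ p, Sylow p G)

lemma Sylow.pairwise_coprime_card :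
    Pairwise fun p q : (Nat.card G).primeFactors =>
      Nat.Coprime (Nat.card (P p)) (Nat.card (P q)) := by
  intro p q hpq
  have : Fact p.1.Prime := ⟨Nat.prime_of_mem_primeFactors p.2⟩
  have : Fact q.1.Prime := ⟨Nat.prime_of_mem_primeFactors q.2⟩
  exact IsPGroup.coprime_card_of_ne _ _ (Subtype.coe_ne_coe.mpr hpq) _ _
    (P p).isPGroup' (P q).isPGroup'

lemma Sylow.nonempty_mulEquiv_pi [Group.IsNilpotent G] :
    Nonempty ((∀ p : (Nat.card G).primeFactors, P p) ≃* G) := by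
  obtain ⟨e⟩ := (Group.isNilpotent_of_finite_tfae.out 0 4).mp ‹Group.IsNilpotent G›
  refine ⟨MulEquiv.trans (MulEquiv.piCongrRight fun p => ?_) e⟩
  have : Fact p.1.Prime := ⟨Nat.prime_of_mem_primeFactors p.2⟩
  have := Sylow.unique_of_normal (P p) inferInstance
  exact ((MulEquiv.piUnique _).trans
    (MulEquiv.subgroupCongr (congrArg _ (Subsingleton.elim _ _)))).symm

end Sylow

/-- If `G` is a finite nilpotent group with prime factors `p₁, …, p_r` and
`m p` is the number of maximal cyclic subgroups of a Sylow `p`-subgroup of `G`, then the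
independence number of the enhanced power graph of `G` is the product of the `m pᵢ`. -/
theorem stmt_3 {G : Type*} [Group G] [Fintype G] (hG : Group.IsNilpotent G)
    (P : ∀ p : ℕ, Sylow p G) (m : ℕ → ℕ)
    (hm : ∀ p ∈ (Fintype.card G).primeFactors,
      m p = {H : Subgroup ↥((P p : Sylow p G) : Subgroup G) | IsMaximalCyclic H}.ncard) :
    indepNum (enhancedPowerGraph G) = ∏ p ∈ (Fintype.card G).primeFactors, m p := by
  rw [← Nat.card_eq_fintype_card] at hm ⊢
  have := hG
  obtain ⟨e⟩ := Sylow.nonempty_mulEquiv_pi P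
  calc indepNum (enhancedPowerGraph G)
      = {H : Subgroup G | IsMaximalCyclic H}.ncard := indepNum_enhancedPowerGraph
    _ = ∏ p : (Nat.card G).primeFactors, {H : Subgroup (P p) | IsMaximalCyclic H}.ncard :=
      e.ncard_setOf_isMaximalCyclic.symm.trans
        (ncard_setOf_isMaximalCyclic_pi_of_coprime (Sylow.pairwise_coprime_card P))
    _ = ∏ p ∈ (Nat.card G).primeFactors, m p := by
      rw [← Finset.prod_coe_sort _ m]
      exact Finset.prod_congr rfl fun p _ => (hm p p.2).symm
end

section
/- Let G be a finite group. If |G| is odd, then the matching number of the enhanced power graph of G equals (|G| − 1)/2. If |G| is even and t is the number of involutions in G, then (|G| − (t − 1))/2 ≤ α'(P_e(G)) ≤ |G|/2. -/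
/-!
A matching arises from any involutive map `σ` on the vertices with `x` adjacent to `σ x`
whenever `σ x ≠ x`: take the edges `{x, σ x}`; it covers everything but the fixed points of `σ`.
In `P_e(G)`, inversion is such a map (`x` and `x⁻¹` lie in `⟨x⟩`), fixing `1` and the `t`
involutions. For odd `|G|` there are no involutions, and the trivial bound `2 α' ≤ |G|` gives
equality. For even `|G|`, Cauchy's theorem yields an involution `i`; composing inversion with
the transposition of `1` and `i` (adjacent in `⟨i⟩`) leaves only `t - 1` fixed points.
-/

open Function

namespace IsMatching'

variable {V : Type*} {g : SimpleGraph V} {M : Set (Sym2 V)}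

theorem two_mul_ncard_eq [Finite V] (hM : IsMatching' g M) :
    2 * M.ncard = {v | ∃ e ∈ M, v ∈ e}.ncard := by
  classical
  have hfin : M.Finite := Set.toFinite M
  have hcover : {v | ∃ e ∈ M, v ∈ e} = ↑(hfin.toFinset.biUnion Sym2.toFinset) := by
    ext v; simp [Sym2.mem_toFinset]
  have hdisj : (↑hfin.toFinset : Set (Sym2 V)).PairwiseDisjoint Sym2.toFinset := by
    rw [hfin.coe_toFinset]
    intro e he f hf hef
    exact Finset.disjoint_left.2 fun v hve hvf =>
      hM.2 he hf hef v (Sym2.mem_toFinset.1 hve) (Sym2.mem_toFinset.1 hvf)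
  have htwo : ∀ e ∈ hfin.toFinset, e.toFinset.card = 2 := fun e he =>
    Sym2.card_toFinset_of_not_isDiag e (g.not_isDiag_of_mem_edgeSet (hM.1 (hfin.mem_toFinset.1 he)))
  rw [hcover, Set.ncard_coe_finset, Finset.card_biUnion hdisj, Finset.sum_congr rfl htwo,
    Finset.sum_const, smul_eq_mul, mul_comm, Set.ncard_eq_toFinset_card M hfin]

theorem two_mul_ncard_le [Finite V] (hM : IsMatching' g M) : 2 * M.ncard ≤ Nat.card V :=
  hM.two_mul_ncard_eq ▸ Set.ncard_le_card _

theorem ncard_le_matchingNum [Finite V] (hM : IsMatching' g M) : M.ncard ≤ matchingNum g :=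
  le_csSup ⟨Nat.card V, by rintro _ ⟨N, hN, rfl⟩; have := hN.two_mul_ncard_le; omega⟩ ⟨M, hM, rfl⟩

end IsMatching'

theorem matchingNum_le_card_div_two {V : Type*} [Finite V] (g : SimpleGraph V) :
    matchingNum g ≤ Nat.card V / 2 :=
  csSup_le' <| by rintro _ ⟨M, hM, rfl⟩; have := hM.two_mul_ncard_le; omega

section InvolutionMatching

variable {V : Type*} {σ : V → V}

def involutionMatching (σ : V → V) : Set (Sym2 V) :=
  (fun x => s(x, σ x)) '' (fixedPoints σ)ᶜ

theorem Function.Involutive.sym2_mk_eq_of_mem (hσ : Involutive σ) {x v : V}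
    (hv : v ∈ s(x, σ x)) : s(x, σ x) = s(v, σ v) := by
  rcases Sym2.mem_iff.1 hv with rfl | rfl
  · rfl
  · rw [hσ x, Sym2.eq_swap]

theorem isMatching'_involutionMatching (g : SimpleGraph V) (hσ : Involutive σ)
    (hadj : ∀ x, σ x ≠ x → g.Adj x (σ x)) : IsMatching' g (involutionMatching σ) := by
  refine ⟨?_, ?_⟩
  · rintro _ ⟨x, hx, rfl⟩
    exact hadj x hx
  · rintro _ ⟨x, -, rfl⟩ _ ⟨y, -, rfl⟩ hne v hvx hvy
    exact hne ((hσ.sym2_mk_eq_of_mem hvx).trans (hσ.sym2_mk_eq_of_mem hvy).symm)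

theorem Function.Involutive.vertices_involutionMatching (hσ : Involutive σ) :
    {v | ∃ e ∈ involutionMatching σ, v ∈ e} = (fixedPoints σ)ᶜ := by
  ext v
  refine ⟨?_, fun hv => ⟨s(v, σ v), ⟨v, hv, rfl⟩, Sym2.mem_mk_left v _⟩⟩
  rintro ⟨_, ⟨x, hx, rfl⟩, hvx⟩
  rcases Sym2.mem_iff.1 hvx with rfl | rfl
  · exact hx
  · exact fun h => hx ((hσ x).symm.trans h).symm

theorem le_matchingNum_of_involutive [Finite V] (g : SimpleGraph V) (hσ : Involutive σ)
    (hadj : ∀ x, σ x ≠ x → g.Adj x (σ x)) :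
    (Nat.card V - (fixedPoints σ).ncard) / 2 ≤ matchingNum g := by
  have hM := isMatching'_involutionMatching g hσ hadj
  have hcount := hM.two_mul_ncard_eq
  rw [hσ.vertices_involutionMatching] at hcount
  have hcompl := Set.ncard_add_ncard_compl (fixedPoints σ)
  have := hM.ncard_le_matchingNum
  omega

end InvolutionMatching

section SwapFixedPoints

variable {α : Type*} [DecidableEq α] {σ : α → α} {a b : α}

theorem Function.Involutive.swap_comp (hσ : Involutive σ) (ha : σ a = a) (hb : σ b = b) :
    Involutive (Equiv.swap a b ∘ σ) := by
  have hcomm : ∀ y, σ (Equiv.swap a b y) = Equiv.swap a b (σ y) := fun y => by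
    rw [← hσ.injective.swap_apply, ha, hb]
  intro x
  simp only [comp_apply, hcomm, Equiv.swap_apply_self, hσ x]

theorem Function.Involutive.swap_comp_apply_of_ne (hσ : Involutive σ) (ha : σ a = a)
    (hb : σ b = b) {x : α} (hxa : x ≠ a) (hxb : x ≠ b) : (Equiv.swap a b ∘ σ) x = σ x :=
  Equiv.swap_apply_of_ne_of_ne (fun h => hxa ((hσ.eq_iff.1 h).trans ha))
    (fun h => hxb ((hσ.eq_iff.1 h).trans hb))

theorem Function.Involutive.fixedPoints_swap_comp (hσ : Involutive σ) (ha : σ a = a)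
    (hb : σ b = b) (hab : a ≠ b) :
    fixedPoints (Equiv.swap a b ∘ σ) = fixedPoints σ \ {a, b} := by
  ext x
  by_cases hxa : x = a
  · subst hxa; simp [IsFixedPt, ha, hab.symm]
  by_cases hxb : x = b
  · subst hxb; simp [IsFixedPt, hb, hab]
  rw [mem_fixedPoints_iff, hσ.swap_comp_apply_of_ne ha hb hxa hxb]
  simp [IsFixedPt, hxa, hxb]

theorem SimpleGraph.adj_swap_comp (g : SimpleGraph α) (hσ : Involutive σ) (ha : σ a = a)
    (hb : σ b = b) (hadj : ∀ x, σ x ≠ x → g.Adj x (σ x)) (hab : g.Adj a b) :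
    ∀ x, (Equiv.swap a b ∘ σ) x ≠ x → g.Adj x ((Equiv.swap a b ∘ σ) x) := by
  intro x hx
  by_cases hxa : x = a
  · subst hxa; simpa [ha] using hab
  by_cases hxb : x = b
  · subst hxb; simpa [hb] using hab.symm
  rw [hσ.swap_comp_apply_of_ne ha hb hxa hxb] at hx ⊢
  exact hadj x hx

end SwapFixedPoints

section Group

variable {G : Type*} [Group G]

theorem enhancedPowerGraph_adj_of_mem_zpowers {x y z : G} (hxy : x ≠ y)
    (hx : x ∈ Subgroup.zpowers z) (hy : y ∈ Subgroup.zpowers z) :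
    (enhancedPowerGraph G).Adj x y :=
  ⟨hxy, z, hx, hy⟩

theorem fixedPoints_inv : fixedPoints (Inv.inv : G → G) = insert 1 {x | orderOf x = 2} := by
  ext x
  rw [mem_fixedPoints_iff, inv_eq_iff_mul_eq_one, ← pow_two, ← orderOf_dvd_iff_pow_eq_one,
    Nat.dvd_prime Nat.prime_two, orderOf_eq_one_iff]
  rfl

theorem ncard_fixedPoints_inv [Finite G] :
    (fixedPoints (Inv.inv : G → G)).ncard = {x : G | orderOf x = 2}.ncard + 1 := by
  rw [fixedPoints_inv, Set.ncard_insert_of_notMem (by simp)]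

theorem enhancedPowerGraph_adj_inv {x : G} (hx : x⁻¹ ≠ x) : (enhancedPowerGraph G).Adj x x⁻¹ :=
  enhancedPowerGraph_adj_of_mem_zpowers hx.symm (Subgroup.mem_zpowers x)
    (Subgroup.inv_mem _ (Subgroup.mem_zpowers x))

variable [Finite G]

theorem le_matchingNum_enhancedPowerGraph :
    (Nat.card G - ({x : G | orderOf x = 2}.ncard + 1)) / 2 ≤ matchingNum (enhancedPowerGraph G) :=
  ncard_fixedPoints_inv (G := G) ▸
    le_matchingNum_of_involutive _ inv_involutive fun _ => enhancedPowerGraph_adj_inv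

theorem le_matchingNum_enhancedPowerGraph_of_orderOf_eq_two {i : G} (hi : orderOf i = 2) :
    (Nat.card G - ({x : G | orderOf x = 2}.ncard - 1)) / 2 ≤
      matchingNum (enhancedPowerGraph G) := by
  classical
  have hi_inv : i⁻¹ = i := inv_eq_of_mul_eq_one_right (by rw [← pow_two, ← hi, pow_orderOf_eq_one])
  have h1i : (1 : G) ≠ i := fun h => by simp [← h] at hi
  have hsub : {1, i} ⊆ fixedPoints (Inv.inv : G → G) := by
    simp [Set.insert_subset_iff, IsFixedPt, hi_inv]
  have hcount := Set.ncard_sdiff_add_ncard_of_subset hsub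
  rw [Set.ncard_pair h1i, ncard_fixedPoints_inv] at hcount
  have hlower := le_matchingNum_of_involutive _ (inv_involutive.swap_comp inv_one hi_inv)
    ((enhancedPowerGraph G).adj_swap_comp inv_involutive inv_one hi_inv
      (fun _ => enhancedPowerGraph_adj_inv)
      (enhancedPowerGraph_adj_of_mem_zpowers h1i (Subgroup.one_mem _) (Subgroup.mem_zpowers i)))
  rw [inv_involutive.fixedPoints_swap_comp inv_one hi_inv h1i] at hlower
  omega

end Group

/-- Let `G` be a finite group. If `|G|` is odd then the matching number of
the enhanced power graph of `G` is `(|G| − 1)/2`; if `|G|` is even and `t` is the number of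
involutions of `G`, then `(|G| − (t − 1))/2 ≤ α'(P_e(G)) ≤ |G|/2`. -/
theorem stmt_5 {G : Type*} [Group G] [Fintype G] (t : ℕ)
    (ht : t = {x : G | orderOf x = 2}.ncard) :
    (Odd (Fintype.card G) →
      matchingNum (enhancedPowerGraph G) = (Fintype.card G - 1) / 2) ∧
    (Even (Fintype.card G) →
      (Fintype.card G - (t - 1)) / 2 ≤ matchingNum (enhancedPowerGraph G) ∧
        matchingNum (enhancedPowerGraph G) ≤ Fintype.card G / 2) := by
  have hupper := matchingNum_le_card_div_two (enhancedPowerGraph G)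
  rw [← Nat.card_eq_fintype_card, ht]
  refine ⟨fun hodd => le_antisymm ?_ ?_, fun heven => ⟨?_, hupper⟩⟩
  · obtain ⟨m, hm⟩ := hodd
    omega
  · have hnone : {x : G | orderOf x = 2} = ∅ := Set.eq_empty_of_forall_notMem fun x hx =>
      Nat.not_even_iff_odd.2 hodd (even_iff_two_dvd.2 (hx ▸ orderOf_dvd_natCard x))
    simpa [hnone] using le_matchingNum_enhancedPowerGraph (G := G)
  · obtain ⟨i, hi⟩ := exists_prime_orderOf_dvd_card' 2 heven.two_dvd
    exact le_matchingNum_enhancedPowerGraph_of_orderOf_eq_two hi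
end

section
/- Let p be a prime and G a finite abelian p-group with exponent p^α. If G is non-cyclic, then the strong metric dimension of the enhanced power graph of G equals |G| − (α + 1); if G is cyclic, it equals |G| − 1. -/
/-!
The identity is adjacent to every vertex of the enhanced power graph, so all distances are at
most two, and a third vertex strongly resolves `u, v` only along a path of length two. Hence a
set strongly resolves the graph iff its complement is a clique containing no two true twins
(vertices with equal closed neighbourhoods), and the strong metric dimension is `|G|` minus the
largest size of such a clique.

Adjacent elements of equal order generate the same cyclic subgroup, hence are twins; so such a
clique has at most as many elements as the exponent `p ^ α` has divisors, namely `α + 1`. If `G`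
is not cyclic, take `g` of order `p ^ α` and `t` of order `p` outside `⟨g⟩`: the elements
`g ^ p ^ i` for `i ≤ α` form a twin-free clique, `g ^ p ^ i * t` separating `g ^ p ^ i` from its
proper powers. If `G` is cyclic the graph is complete, any two vertices are twins, and the
largest twin-free clique is a single vertex.
-/

namespace SimpleGraph

variable {V : Type*} (g : SimpleGraph V)

def closedNbhd (v : V) : Set V := insert v (g.neighborSet v)

def StronglyResolves (z u v : V) : Prop :=
  g.dist z u = g.dist z v + g.dist v u ∨ g.dist z v = g.dist z u + g.dist u v

def IsStrongResolving (U : Set V) : Prop :=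
  ∀ u v : V, u ≠ v → ∃ z ∈ U, g.StronglyResolves z u v

def IsTwinFreeClique (T : Set V) : Prop :=
  T.Pairwise fun u v => g.Adj u v ∧ g.closedNbhd u ≠ g.closedNbhd v

variable {g}

lemma sdim_eq_sInf : sdim g = sInf {k | ∃ U : Set V, g.IsStrongResolving U ∧ U.ncard = k} := rfl

lemma stronglyResolves_comm {z u v : V} : g.StronglyResolves z u v ↔ g.StronglyResolves z v u :=
  Or.comm

lemma stronglyResolves_self (u v : V) : g.StronglyResolves u u v :=
  Or.inr (by rw [dist_self, zero_add])

lemma mem_closedNbhd_iff {u w : V} (hwu : w ≠ u) : w ∈ g.closedNbhd u ↔ g.Adj u w := by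
  simp [closedNbhd, hwu]

section UniversalVertex

variable {c : V} (hc : ∀ v, v ≠ c → g.Adj c v)
include hc

lemma dist_eq_two_of_forall_adj {u v : V} (huv : u ≠ v) (hadj : ¬ g.Adj u v) :
    g.dist u v = 2 := by
  have huc : u ≠ c := by rintro rfl; exact hadj (hc v huv.symm)
  have hvc : v ≠ c := by rintro rfl; exact hadj (hc u huc).symm
  let w : g.Walk u v := .cons (hc u huc).symm (.cons (hc v hvc) .nil)
  have hle : g.dist u v ≤ 2 := dist_le w
  have hpos : 0 < g.dist u v := w.reachable.pos_dist_of_ne huv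
  have hne : g.dist u v ≠ 1 := fun h => hadj (dist_eq_one_iff_adj.1 h)
  omega

open scoped Classical in
lemma dist_eq_ite_of_forall_adj (u v : V) :
    g.dist u v = if u = v then 0 else if g.Adj u v then 1 else 2 := by
  split_ifs with huv hadj
  · rw [huv, dist_self]
  · exact dist_eq_one_iff_adj.2 hadj
  · exact dist_eq_two_of_forall_adj hc huv hadj

/-- Distances take only the values `0`, `1`, `2`, so a third vertex resolves `u, v` only along
a path `z - v - u` or `z - u - v` of length two. -/
lemma stronglyResolves_iff_of_forall_adj {z u v : V} (hzu : z ≠ u) (hzv : z ≠ v)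
    (huv : u ≠ v) :
    g.StronglyResolves z u v ↔ g.Adj u v ∧ (g.Adj z u ↔ ¬ g.Adj z v) := by
  simp only [StronglyResolves, dist_eq_ite_of_forall_adj hc, hzu, hzv, huv, huv.symm,
    if_false]
  by_cases h1 : g.Adj u v <;> by_cases h2 : g.Adj z u <;> by_cases h3 : g.Adj z v <;>
    simp [h1, h2, h3, g.adj_comm v u]

lemma isStrongResolving_iff_isTwinFreeClique_compl {U : Set V} :
    g.IsStrongResolving U ↔ g.IsTwinFreeClique Uᶜ := by
  constructor
  · intro hU u hu v hv huv
    obtain ⟨z, hzU, hz⟩ := hU u v huv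
    have hzu : z ≠ u := by rintro rfl; exact hu hzU
    have hzv : z ≠ v := by rintro rfl; exact hv hzU
    obtain ⟨hadj, hsep⟩ := (stronglyResolves_iff_of_forall_adj hc hzu hzv huv).1 hz
    refine ⟨hadj, fun heq => ?_⟩
    have := congrArg (z ∈ ·) heq
    simp only [mem_closedNbhd_iff hzu, mem_closedNbhd_iff hzv, g.adj_comm u, g.adj_comm v] at this
    exact (iff_not_self (this ▸ hsep)).elim
  · intro hT
    have hresolve {u v w : V} (huv : u ≠ v) (hadj : g.Adj u v) (hwu : w ∈ g.closedNbhd u)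
        (hwv : w ∉ g.closedNbhd v) : ∃ z ∈ U, g.StronglyResolves z u v := by
      have hwv' : w ≠ v := by rintro rfl; exact hwv (Set.mem_insert w _)
      have hwu' : w ≠ u := by
        rintro rfl; exact hwv ((mem_closedNbhd_iff huv).2 hadj.symm)
      rw [mem_closedNbhd_iff hwu'] at hwu
      rw [mem_closedNbhd_iff hwv'] at hwv
      by_cases hvU : v ∈ U
      · exact ⟨v, hvU, stronglyResolves_comm.1 (stronglyResolves_self v u)⟩
      by_cases hwU : w ∈ U
      · refine ⟨w, hwU, (stronglyResolves_iff_of_forall_adj hc hwu' hwv' huv).2 ⟨hadj, ?_⟩⟩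
        simp [g.adj_comm w, hwu, hwv]
      · exact absurd (hT hwU hvU hwv').1.symm hwv
    intro u v huv
    by_cases huU : u ∈ U
    · exact ⟨u, huU, stronglyResolves_self u v⟩
    by_cases hvU : v ∈ U
    · exact ⟨v, hvU, stronglyResolves_comm.1 (stronglyResolves_self v u)⟩
    obtain ⟨hadj, hne⟩ := hT huU hvU huv
    by_cases hsub : g.closedNbhd u ⊆ g.closedNbhd v
    · obtain ⟨w, hwv, hwu⟩ := Set.not_subset.1 fun h => hne (hsub.antisymm h)
      obtain ⟨z, hzU, hz⟩ := hresolve huv.symm hadj.symm hwv hwu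
      exact ⟨z, hzU, stronglyResolves_comm.1 hz⟩
    · obtain ⟨w, hwu, hwv⟩ := Set.not_subset.1 hsub
      exact hresolve huv hadj hwu hwv

lemma sdim_eq_of_forall_adj [Finite V] {T : Set V} (hT : g.IsTwinFreeClique T)
    (hmax : ∀ S, g.IsTwinFreeClique S → S.ncard ≤ T.ncard) :
    sdim g = Nat.card V - T.ncard := by
  have hcompl (U : Set V) : U.ncard = Nat.card V - Uᶜ.ncard := by
    have := Set.ncard_add_ncard_compl U
    omega
  rw [sdim_eq_sInf]
  refine IsLeast.csInf_eq ⟨⟨Tᶜ, ?_, ?_⟩, ?_⟩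
  · rwa [isStrongResolving_iff_isTwinFreeClique_compl hc, compl_compl]
  · rw [hcompl, compl_compl]
  · rintro k ⟨U, hU, rfl⟩
    have := hmax _ ((isStrongResolving_iff_isTwinFreeClique_compl hc).1 hU)
    rw [hcompl U]
    omega

end UniversalVertex

lemma closedNbhd_top (v : V) : (⊤ : SimpleGraph V).closedNbhd v = Set.univ := by
  ext w
  by_cases hwv : w = v <;> simp [closedNbhd, hwv]

lemma sdim_top [Finite V] [Nonempty V] : sdim (⊤ : SimpleGraph V) = Nat.card V - 1 := by
  let c := Classical.arbitrary V
  rw [sdim_eq_of_forall_adj (c := c) (fun _ hv => hv.symm) (Set.pairwise_singleton c _),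
    Set.ncard_singleton]
  intro S hS
  rw [Set.ncard_singleton]
  refine (Set.ncard_le_one).2 fun u hu v hv => by_contra fun huv => ?_
  exact (hS hu hv huv).2 (by rw [closedNbhd_top, closedNbhd_top])

end SimpleGraph

open SimpleGraph Subgroup

section Group

variable {G : Type*} [Group G]

lemma enhancedPowerGraph_adj_one {x : G} (hx : x ≠ 1) : (enhancedPowerGraph G).Adj 1 x :=
  ⟨hx.symm, x, one_mem _, mem_zpowers x⟩

lemma mem_closedNbhd_enhancedPowerGraph_iff {x w : G} :
    w ∈ (enhancedPowerGraph G).closedNbhd x ↔ ∃ c, x ∈ zpowers c ∧ w ∈ zpowers c := by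
  by_cases hwx : w = x
  · subst hwx
    exact iff_of_true (Set.mem_insert w _) ⟨w, mem_zpowers w, mem_zpowers w⟩
  · rw [mem_closedNbhd_iff hwx]
    exact ⟨fun h => h.2, fun h => ⟨Ne.symm hwx, h⟩⟩

lemma enhancedPowerGraph_eq_top [IsCyclic G] : enhancedPowerGraph G = ⊤ := by
  obtain ⟨c, hc⟩ := IsCyclic.exists_generator (α := G)
  ext x y
  exact ⟨fun h => h.1, fun h => ⟨h, c, hc x, hc y⟩⟩

lemma IsPGroup.exists_pow_mem_of_notMem {p : ℕ} (hG : IsPGroup p G) {H : Subgroup G} {x : G}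
    (hx : x ∉ H) : ∃ y ∉ H, y ^ p ∈ H := by
  obtain ⟨k, hk⟩ := hG x
  induction k generalizing x with
  | zero =>
    rw [pow_zero, pow_one] at hk
    exact absurd (hk ▸ H.one_mem) hx
  | succ k ih =>
    by_cases hxp : x ^ p ∈ H
    · exact ⟨x, hx, hxp⟩
    · exact ih hxp (by rwa [← pow_mul, ← pow_succ'])

section Finite

variable [Finite G]

/-- The powers of `y` already exhaust the at most `orderOf y` solutions of `w ^ orderOf y = 1`
in the cyclic group `zpowers z`. -/
lemma mem_zpowers_of_orderOf_dvd {x y z : G} (hx : x ∈ zpowers z)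
    (hy : y ∈ zpowers z) (h : orderOf x ∣ orderOf y) : x ∈ zpowers y := by
  classical
  have := Fintype.ofFinite (zpowers z)
  let x' : zpowers z := ⟨x, hx⟩
  let y' : zpowers z := ⟨y, hy⟩
  have hpowers :
      (Finset.range (orderOf y')).image (y' ^ ·) = Finset.univ.filter (· ^ orderOf y' = 1) := by
    refine Finset.eq_of_subset_of_card_le (fun w hw => ?_) ?_
    · obtain ⟨k, -, rfl⟩ := Finset.mem_image.1 hw
      rw [Finset.mem_filter, ← pow_mul, mul_comm, pow_mul, pow_orderOf_eq_one, one_pow]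
      exact ⟨Finset.mem_univ _, rfl⟩
    · rw [Finset.card_image_of_injOn (fun i hi j hj => pow_injOn_Iio_orderOf (by simpa using hi)
        (by simpa using hj)), Finset.card_range]
      exact IsCyclic.card_pow_eq_one_le (orderOf_pos y')
  have hx' : x' ∈ (Finset.range (orderOf y')).image (y' ^ ·) := by
    rw [hpowers, Finset.mem_filter]
    refine ⟨Finset.mem_univ _, orderOf_dvd_iff_pow_eq_one.1 ?_⟩
    rwa [Subgroup.orderOf_mk, Subgroup.orderOf_mk]
  obtain ⟨k, -, hk⟩ := Finset.mem_image.1 hx'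
  exact ⟨k, by simpa [y', x'] using congrArg Subtype.val hk⟩

lemma closedNbhd_eq_of_adj_of_orderOf_eq {x y : G} (hadj : (enhancedPowerGraph G).Adj x y)
    (hxy : orderOf x = orderOf y) :
    (enhancedPowerGraph G).closedNbhd x = (enhancedPowerGraph G).closedNbhd y := by
  obtain ⟨-, c, hx, hy⟩ := hadj
  have hzpowers : zpowers x = zpowers y :=
    le_antisymm (zpowers_le.2 (mem_zpowers_of_orderOf_dvd hx hy hxy.dvd))
      (zpowers_le.2 (mem_zpowers_of_orderOf_dvd hy hx hxy.symm.dvd))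
  ext w
  simp only [mem_closedNbhd_enhancedPowerGraph_iff, ← zpowers_le, hzpowers]

/-- Adjacent vertices of equal order are twins, so the order is injective on a twin-free
clique. -/
lemma SimpleGraph.IsTwinFreeClique.ncard_le_card_divisors_exponent {T : Set G}
    (hT : (enhancedPowerGraph G).IsTwinFreeClique T) :
    T.ncard ≤ (Monoid.exponent G).divisors.card := by
  have hinj : T.InjOn orderOf := fun x hx y hy hxy => by_contra fun hne =>
    (hT hx hy hne).2 (closedNbhd_eq_of_adj_of_orderOf_eq (hT hx hy hne).1 hxy)
  have hmaps : ∀ x ∈ T, orderOf x ∈ ((Monoid.exponent G).divisors : Set ℕ) := fun x _ =>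
    Nat.mem_divisors.2 ⟨Monoid.order_dvd_exponent x, Monoid.exponent_ne_zero_of_finite⟩
  simpa using Set.ncard_le_ncard_of_injOn orderOf hmaps hinj

end Finite

end Group

section CommGroup

variable {G : Type*} [CommGroup G] [Finite G]

/-- The witness is `x * t`: its `p ^ m`-th power is `x ^ p ^ m`, but its order divides that of
`x` without it lying in `zpowers x`. -/
lemma closedNbhd_pow_ne_closedNbhd {x t : G} {p m : ℕ} (ht : orderOf t = p)
    (htx : t ∉ zpowers x) (hpx : p ∣ orderOf x) (hm : m ≠ 0) :
    (enhancedPowerGraph G).closedNbhd (x ^ p ^ m) ≠ (enhancedPowerGraph G).closedNbhd x := by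
  intro heq
  have ht_pow {n : ℕ} (hn : p ∣ n) : t ^ n = 1 := orderOf_dvd_iff_pow_eq_one.1 (ht ▸ hn)
  have hxt_pow : (x * t) ^ p ^ m = x ^ p ^ m := by
    rw [mul_pow, ht_pow (dvd_pow_self p hm), mul_one]
  have hmem : x * t ∈ (enhancedPowerGraph G).closedNbhd (x ^ p ^ m) :=
    mem_closedNbhd_enhancedPowerGraph_iff.2
      ⟨x * t, hxt_pow ▸ pow_mem (mem_zpowers _) _, mem_zpowers _⟩
  obtain ⟨c, hxc, hxtc⟩ := mem_closedNbhd_enhancedPowerGraph_iff.1 (heq ▸ hmem)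
  have hdvd : orderOf (x * t) ∣ orderOf x := orderOf_dvd_of_pow_eq_one <| by
    rw [mul_pow, pow_orderOf_eq_one, ht_pow hpx, mul_one]
  apply htx
  have hxt : x * t ∈ zpowers x := mem_zpowers_of_orderOf_dvd hxtc hxc hdvd
  simpa using mul_mem (inv_mem (mem_zpowers x)) hxt

lemma exists_orderOf_eq_prime_notMem_zpowers {p α : ℕ} (hp : p.Prime) (hG : IsPGroup p G)
    (hα : Monoid.exponent G = p ^ α) (hnc : ¬ IsCyclic G) {g : G} (hg : orderOf g = p ^ α) :
    ∃ t, orderOf t = p ∧ t ∉ zpowers g := by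
  obtain ⟨x, hx⟩ : ∃ x, x ∉ zpowers g := not_forall.1 fun h => hnc ⟨g, h⟩
  obtain ⟨y, hy, hyp⟩ := hG.exists_pow_mem_of_notMem hx
  have hy_exp : y ^ p ^ α = 1 := hα ▸ Monoid.pow_exponent_eq_one y
  obtain _ | k := α
  · rw [pow_zero, pow_one] at hy_exp
    exact absurd (hy_exp ▸ one_mem _) hy
  have hgp : orderOf (g ^ p) = p ^ k := by
    rw [orderOf_pow_of_dvd hp.ne_zero (hg ▸ dvd_pow_self p k.succ_ne_zero), hg, pow_succ,
      Nat.mul_div_cancel _ hp.pos]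
  have hyp_dvd : orderOf (y ^ p) ∣ p ^ k :=
    orderOf_dvd_of_pow_eq_one (by rwa [← pow_mul, ← pow_succ'])
  obtain ⟨s, hs⟩ := mem_zpowers_iff.1 <|
    mem_zpowers_of_orderOf_dvd hyp (pow_mem (mem_zpowers g) p) (hgp ▸ hyp_dvd)
  have hgs : (g ^ s) ^ p = y ^ p := by
    rw [← zpow_natCast, ← zpow_mul, mul_comm, zpow_mul, zpow_natCast, hs]
  have hnotMem : y * (g ^ s)⁻¹ ∉ zpowers g := fun h =>
    hy (by simpa using mul_mem h (zpow_mem (mem_zpowers g) s))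
  have := Fact.mk hp
  refine ⟨y * (g ^ s)⁻¹, orderOf_eq_prime ?_ fun h => hnotMem (h ▸ one_mem _), hnotMem⟩
  rw [mul_pow, inv_pow, hgs, mul_inv_cancel]

lemma exists_isTwinFreeClique_ncard_eq {p α : ℕ} (hp : p.Prime) (hG : IsPGroup p G)
    (hα : Monoid.exponent G = p ^ α) (hnc : ¬ IsCyclic G) :
    ∃ T : Set G, (enhancedPowerGraph G).IsTwinFreeClique T ∧ T.ncard = α + 1 := by
  obtain ⟨g, hg⟩ := Monoid.exists_orderOf_eq_exponent (Monoid.ExponentExists.of_finite (G := G))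
  rw [hα] at hg
  obtain ⟨t, ht, htg⟩ := exists_orderOf_eq_prime_notMem_zpowers hp hG hα hnc hg
  have hg_pow {i : ℕ} : g ^ p ^ i ∈ zpowers g := pow_mem (mem_zpowers g) _
  have hpair {i j : ℕ} (hij : i < j) (hj : j ≤ α) :
      (enhancedPowerGraph G).Adj (g ^ p ^ i) (g ^ p ^ j) ∧
        (enhancedPowerGraph G).closedNbhd (g ^ p ^ i) ≠
          (enhancedPowerGraph G).closedNbhd (g ^ p ^ j) := by
    have hpow : g ^ p ^ j = (g ^ p ^ i) ^ p ^ (j - i) := by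
      rw [← pow_mul, ← pow_add, Nat.add_sub_cancel' hij.le]
    have hord : orderOf (g ^ p ^ i) = p ^ (α - i) := by
      rw [orderOf_pow_of_dvd (pow_ne_zero _ hp.ne_zero) (hg ▸ pow_dvd_pow p (by omega)), hg,
        Nat.pow_div (by omega) hp.pos]
    have hne : (enhancedPowerGraph G).closedNbhd (g ^ p ^ j) ≠
        (enhancedPowerGraph G).closedNbhd (g ^ p ^ i) := by
      rw [hpow]
      refine closedNbhd_pow_ne_closedNbhd ht (fun h => htg (zpowers_le.2 hg_pow h)) ?_ (by omega)
      exact hord ▸ dvd_pow_self p (by omega)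
    exact ⟨⟨fun h => hne (h ▸ rfl), g, hg_pow, hg_pow⟩, hne.symm⟩
  classical
  refine ⟨(Finset.range (α + 1)).image (g ^ p ^ ·), ?_, ?_⟩
  · rintro _ hx _ hy hne
    simp only [Finset.coe_image, Finset.coe_range, Set.mem_image, Set.mem_Iio] at hx hy
    obtain ⟨i, hi, rfl⟩ := hx
    obtain ⟨j, hj, rfl⟩ := hy
    rcases lt_trichotomy i j with hij | rfl | hij
    · exact hpair hij (by omega)
    · exact absurd rfl hne
    · exact ⟨(hpair hij (by omega)).1.symm, (hpair hij (by omega)).2.symm⟩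
  · rw [Set.ncard_coe_finset, Finset.card_image_of_injOn, Finset.card_range]
    intro i hi j hj hij
    simp only [Finset.coe_range, Set.mem_Iio] at hi hj
    by_contra hne
    rcases Nat.lt_or_gt_of_ne hne with h | h
    · exact (hpair h (by omega)).2 (congrArg _ hij)
    · exact (hpair h (by omega)).2 (congrArg _ hij.symm)

end CommGroup

/-- Let `p` be a prime and `G` a finite abelian `p`-group with exponent
`p^α`. If `G` is non-cyclic, the strong metric dimension of the enhanced power graph of `G`
is `|G| − (α + 1)`; if `G` is cyclic, it is `|G| − 1`. -/
theorem stmt_10 {G : Type*} [CommGroup G] [Fintype G] {p : ℕ} (hp : p.Prime)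
    (hG : IsPGroup p G) (α : ℕ) (hα : Monoid.exponent G = p ^ α) :
    (¬ IsCyclic G → sdim (enhancedPowerGraph G) = Fintype.card G - (α + 1)) ∧
    (IsCyclic G → sdim (enhancedPowerGraph G) = Fintype.card G - 1) := by
  rw [← Nat.card_eq_fintype_card]
  refine ⟨fun hnc => ?_, fun _ => by rw [enhancedPowerGraph_eq_top, sdim_top]⟩
  obtain ⟨T, hT, hcard⟩ := exists_isTwinFreeClique_ncard_eq hp hG hα hnc
  have hmax (S : Set G) (hS : (enhancedPowerGraph G).IsTwinFreeClique S) : S.ncard ≤ T.ncard :=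
    calc S.ncard ≤ (Monoid.exponent G).divisors.card := hS.ncard_le_card_divisors_exponent
      _ = T.ncard := by
        rw [hα, Nat.divisors_prime_pow hp, Finset.card_map, Finset.card_range, hcard]
  rw [sdim_eq_of_forall_adj (fun _ => enhancedPowerGraph_adj_one) hT hmax, hcard]
end

section
/- Let n ≥ 1 and write n = 3^k · t with k ≥ 0 and 3 ∤ t. In the group U_{6n} = ⟨a, b : a^{2n} = b^3 = e, ba = ab^{-1}⟩, the group is the union U_{6n} = ⟨a⟩ ∪ ⟨ab⟩ ∪ ⟨ab^2⟩ ∪ ⋃_{i=0}^{k} ( ⟨a^{2·3^i} b⟩ ∪ ⟨a^{2·3^i} b^2⟩ ). -/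
theorem exists_eq_pow_mul_not_dvd_of_not_pow_dvd {α : Type*} [CommMonoid α] {p m : α} {k : ℕ}
    (h : ¬ p ^ k ∣ m) : ∃ v < k, ∃ j, m = p ^ v * j ∧ ¬ p ∣ j := by
  induction k with
  | zero => exact absurd (pow_zero p ▸ one_dvd m) h
  | succ k ih =>
    by_cases hk : p ^ k ∣ m
    · obtain ⟨j, rfl⟩ := hk
      refine ⟨k, k.lt_succ_self, j, rfl, fun hj => h ?_⟩
      rw [pow_succ]
      exact mul_dvd_mul_left _ hj
    · obtain ⟨v, hv, hj⟩ := ih hk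
      exact ⟨v, hv.trans k.lt_succ_self, hj⟩

open Subgroup

section

variable {G : Type*} [Group G]

theorem zpow_eq_zpow_of_modEq {x : G} {n : ℕ} (hx : x ^ n = 1) {u v : ℤ}
    (huv : u ≡ v [ZMOD n]) : x ^ u = x ^ v := by
  rw [zpow_eq_zpow_emod' u hx, zpow_eq_zpow_emod' v hx, huv]

theorem Commute.mem_zpowers_mul_of_coprime {x y : G} (hxy : Commute x y) {s r : ℕ}
    (hx : x ^ s = 1) (hy : y ^ r = 1) (hsr : s.Coprime r) : y ∈ zpowers (x * y) := by
  obtain ⟨u, w, huw⟩ := Nat.isCoprime_iff_coprime.2 hsr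
  refine mem_zpowers_iff.2 ⟨s * u, ?_⟩
  calc (x * y) ^ ((s : ℤ) * u) = x ^ ((s : ℤ) * u) * y ^ ((s : ℤ) * u) := hxy.mul_zpow _
    _ = y ^ (u * s + w * r : ℤ) := by
      rw [zpow_add, mul_comm u, mul_comm w, zpow_mul, zpow_mul, zpow_mul, zpow_natCast,
        zpow_natCast, zpow_natCast, hx, hy, one_zpow, one_zpow, one_mul, mul_one]
    _ = y := by rw [huw, zpow_one]

theorem Commute.zpow_mul_zpow_mem_zpowers_mul_of_coprime {x y : G} (hxy : Commute x y)
    {s r : ℕ} (hx : x ^ s = 1) (hy : y ^ r = 1) (hsr : s.Coprime r) (i j : ℤ) :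
    x ^ i * y ^ j ∈ zpowers (x * y) := by
  have hy_mem : y ∈ zpowers (x * y) := hxy.mem_zpowers_mul_of_coprime hx hy hsr
  have hx_mem : x ∈ zpowers (x * y) :=
    hxy.eq ▸ hxy.symm.mem_zpowers_mul_of_coprime hy hx hsr.symm
  exact mul_mem (zpow_mem hx_mem i) (zpow_mem hy_mem j)

theorem Commute.zpow_mul_zpow_mem_zpowers_mul_pow {c b : G} (hcb : Commute c b) {n : ℕ}
    (hb : b ^ n = 1) {r : ℕ} {j q : ℤ} (hrj : r * j ≡ q [ZMOD n]) :
    c ^ j * b ^ q ∈ zpowers (c * b ^ r) := by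
  refine mem_zpowers_iff.2 ⟨j, ?_⟩
  rw [(hcb.pow_right r).mul_zpow, ← zpow_natCast, ← zpow_mul, zpow_eq_zpow_of_modEq hb hrj]

theorem Commute.zpow_mul_zpow_mem_zpowers_mul_or_mul_sq {c b : G} (hcb : Commute c b)
    (hb : b ^ 3 = 1) {j q : ℤ} (hj : ¬ 3 ∣ j) (hq : ¬ 3 ∣ q) :
    c ^ j * b ^ q ∈ zpowers (c * b) ∨ c ^ j * b ^ q ∈ zpowers (c * b ^ 2) := by
  have hr : ((1 : ℕ) * j ≡ q [ZMOD (3 : ℕ)]) ∨ ((2 : ℕ) * j ≡ q [ZMOD (3 : ℕ)]) := by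
    simp only [Int.ModEq, Nat.cast_one, Nat.cast_ofNat, one_mul]
    omega
  rcases hr with hr | hr
  · have hmem := hcb.zpow_mul_zpow_mem_zpowers_mul_pow hb hr
    rw [pow_one] at hmem
    exact .inl hmem
  · exact .inr (hcb.zpow_mul_zpow_mem_zpowers_mul_pow hb hr)

end

namespace U6n

variable {G : Type*} [Group G] {a b : G}

theorem zpow_mul_eq_mul_zpow_neg (hba : b * a = a * b⁻¹) (q : ℤ) : b ^ q * a = a * b ^ (-q) := by
  have hconj : a⁻¹ * b * a⁻¹⁻¹ = b⁻¹ := by rw [inv_inv, mul_assoc, hba, inv_mul_cancel_left]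
  have := conj_zpow (i := q) (a := a⁻¹) (b := b)
  rw [hconj, inv_zpow', inv_inv] at this
  rw [this]
  group

theorem zpow_mul_inv_eq_inv_mul_zpow_neg (hba : b * a = a * b⁻¹) (q : ℤ) :
    b ^ q * a⁻¹ = a⁻¹ * b ^ (-q) := by
  have h := zpow_mul_eq_mul_zpow_neg hba (-q)
  rw [neg_neg] at h
  rw [eq_inv_mul_iff_mul_eq, ← mul_assoc, ← h, mul_inv_cancel_right]

theorem exists_eq_zpow_mul_zpow (hba : b * a = a * b⁻¹) {x : G} (hx : x ∈ closure {a, b}) :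
    ∃ p q : ℤ, x = a ^ p * b ^ q := by
  induction hx using closure_induction_right with
  | one => exact ⟨0, 0, by simp⟩
  | mul_right x _ y hy ih =>
    obtain ⟨p, q, rfl⟩ := ih
    rcases hy with rfl | rfl
    · exact ⟨p + 1, -q, by rw [mul_assoc, zpow_mul_eq_mul_zpow_neg hba, zpow_add_one, mul_assoc]⟩
    · exact ⟨p, q + 1, by rw [zpow_add_one, mul_assoc]⟩
  | mul_inv_cancel x _ y hy ih =>
    obtain ⟨p, q, rfl⟩ := ih
    rcases hy with rfl | rfl
    · exact ⟨p - 1, -q, by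
        rw [mul_assoc, zpow_mul_inv_eq_inv_mul_zpow_neg hba, zpow_sub_one, mul_assoc]⟩
    · exact ⟨p, q - 1, by rw [zpow_sub_one, mul_assoc]⟩

theorem commute_sq (hba : b * a = a * b⁻¹) : Commute (a ^ 2) b := by
  have hab : b⁻¹ * a = a * b := by simpa using zpow_mul_eq_mul_zpow_neg hba (-1)
  rw [Commute, SemiconjBy, sq, mul_assoc, ← hab, ← mul_assoc, ← hba, mul_assoc]

theorem mul_zpow_sq (hba : b * a = a * b⁻¹) (q : ℤ) : (a * b ^ q) ^ 2 = a ^ 2 := by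
  rw [sq, sq, mul_assoc, ← mul_assoc (b ^ q), zpow_mul_eq_mul_zpow_neg hba, mul_assoc,
    zpow_neg, inv_mul_cancel, mul_one]

theorem zpow_odd_mul_zpow_mem_zpowers (hba : b * a = a * b⁻¹) (m q : ℤ) :
    a ^ (2 * m + 1) * b ^ q ∈ zpowers (a * b ^ q) := by
  refine mem_zpowers_iff.2 ⟨2 * m + 1, ?_⟩
  rw [zpow_add_one, zpow_mul, zpow_ofNat, mul_zpow_sq hba, ← zpow_ofNat, ← zpow_mul, ← mul_assoc,
    zpow_add_one]

theorem zpow_odd_mul_zpow_mem_zpowers_mul_or_mul_sq (hba : b * a = a * b⁻¹) (hb : b ^ 3 = 1)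
    {q : ℤ} (hq : ¬ 3 ∣ q) (m : ℤ) :
    a ^ (2 * m + 1) * b ^ q ∈ zpowers (a * b) ∨ a ^ (2 * m + 1) * b ^ q ∈ zpowers (a * b ^ 2) := by
  have hr : q ≡ 1 [ZMOD (3 : ℕ)] ∨ q ≡ 2 [ZMOD (3 : ℕ)] := by
    simp only [Int.ModEq]
    omega
  have hmem := zpow_odd_mul_zpow_mem_zpowers hba m q
  rcases hr with hr | hr
  · rw [zpow_eq_zpow_of_modEq hb hr, zpow_one] at hmem ⊢
    exact .inl hmem
  · rw [zpow_eq_zpow_of_modEq hb hr, zpow_ofNat] at hmem ⊢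
    exact .inr hmem

end U6n

theorem stmt_11_general {G : Type*} [Group G] (n k t : ℕ)
    (hnkt : n = 3 ^ k * t) (h3t : ¬ 3 ∣ t)
    (a b : G) (ha : a ^ (2 * n) = 1) (hb : b ^ 3 = 1) (hba : b * a = a * b⁻¹)
    (hgen : Subgroup.closure {a, b} = ⊤) :
    ∀ x : G, x ∈ Subgroup.zpowers a ∨ x ∈ Subgroup.zpowers (a * b) ∨
      x ∈ Subgroup.zpowers (a * b ^ 2) ∨
      ∃ i ≤ k, x ∈ Subgroup.zpowers (a ^ (2 * 3 ^ i) * b) ∨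
        x ∈ Subgroup.zpowers (a ^ (2 * 3 ^ i) * b ^ 2) := by
  intro x
  obtain ⟨p, q, rfl⟩ := U6n.exists_eq_zpow_mul_zpow hba (hgen ▸ mem_top x)
  by_cases hq : (3 : ℤ) ∣ q
  · have hq0 : q ≡ 0 [ZMOD (3 : ℕ)] := Int.modEq_zero_iff_dvd.2 (mod_cast hq)
    rw [zpow_eq_zpow_of_modEq hb hq0, zpow_zero, mul_one]
    exact .inl (zpow_mem_zpowers a p)
  obtain ⟨m, rfl | rfl⟩ := Int.even_or_odd' p
  · have hpow (v : ℕ) (j : ℤ) : a ^ (2 * ((3 : ℤ) ^ v * j)) = (a ^ (2 * 3 ^ v)) ^ j := by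
      rw [← zpow_natCast, ← zpow_mul]
      push_cast
      ring_nf
    have hcomm (v : ℕ) : Commute (a ^ (2 * 3 ^ v)) b :=
      pow_mul a 2 (3 ^ v) ▸ (U6n.commute_sq hba).pow_left _
    refine .inr (.inr (.inr ?_))
    by_cases hm : (3 : ℤ) ^ k ∣ m
    · obtain ⟨j, rfl⟩ := hm
      have hx : (a ^ (2 * 3 ^ k)) ^ t = 1 := by rw [← pow_mul, mul_assoc, ← hnkt, ha]
      have ht3 : t.Coprime 3 := ((Nat.Prime.coprime_iff_not_dvd Nat.prime_three).2 h3t).symm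
      rw [hpow]
      exact ⟨k, le_rfl, .inl ((hcomm k).zpow_mul_zpow_mem_zpowers_mul_of_coprime hx hb ht3 j q)⟩
    · obtain ⟨v, hvk, j, rfl, hj⟩ := exists_eq_pow_mul_not_dvd_of_not_pow_dvd hm
      rw [hpow]
      exact ⟨v, hvk.le, (hcomm v).zpow_mul_zpow_mem_zpowers_mul_or_mul_sq hb hj hq⟩
  · rcases U6n.zpow_odd_mul_zpow_mem_zpowers_mul_or_mul_sq hba hb hq m with h | h
    exacts [.inr (.inl h), .inr (.inr (.inl h))]

/-- In `U_{6n} = ⟨a, b : a^{2n} = b³ = e, ba = ab⁻¹⟩`, with `n = 3^k·t`,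
`3 ∤ t`, the group is the union
`⟨a⟩ ∪ ⟨ab⟩ ∪ ⟨ab²⟩ ∪ ⋃_{i=0}^{k} (⟨a^{2·3^i}b⟩ ∪ ⟨a^{2·3^i}b²⟩)`. -/
theorem stmt_11 {G : Type*} [Group G] [Fintype G] (n k t : ℕ) (hn : 1 ≤ n)
    (hnkt : n = 3 ^ k * t) (h3t : ¬ 3 ∣ t)
    (a b : G) (ha : a ^ (2 * n) = 1) (hb : b ^ 3 = 1) (hba : b * a = a * b⁻¹)
    (hcard : Fintype.card G = 6 * n) (hgen : Subgroup.closure {a, b} = ⊤) :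
    ∀ x : G, x ∈ Subgroup.zpowers a ∨ x ∈ Subgroup.zpowers (a * b) ∨
      x ∈ Subgroup.zpowers (a * b ^ 2) ∨
      ∃ i ≤ k, x ∈ Subgroup.zpowers (a ^ (2 * 3 ^ i) * b) ∨
        x ∈ Subgroup.zpowers (a ^ (2 * 3 ^ i) * b ^ 2) :=
  stmt_11_general n k t hnkt h3t a b ha hb hba hgen
end
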